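/- Let ∇ be a pseudoconnection on ξ with principal homomorphism P and let i ≥ 0. Then for every generator ω⊗s ∈ Ω^i(ξ), d^∇(d^∇(ω⊗s)) = ω ∧ E^∇(s) + (−1)^i dω ∧ L^∇(s), where E^∇ = d^∇∘∇ and L^∇ = P∘∇ − ∇∘P. -/
import Mathlib


/-!
Algebraic model of smooth forms with values in a vector bundle, following the paper's setup:
`R` plays the role of the ring `Ω⁰(M)` of smooth functions, `Ω k` of the `R`-module `Ω^k(M)`
of smooth `k`-forms, `S` of the `R`-module `Ω⁰(ξ)` of smooth sections of a vector bundle `ξ`,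
and `Ω k ⊗[R] S` of `Ω^k(ξ) = Ω^k(M) ⊗_{Ω⁰(M)} Ω⁰(ξ)`.  A bundle homomorphism over the
identity corresponds to an `R`-linear map `S →ₗ[R] S`; its induced action on `Ω^k(ξ)` is
`LinearMap.lTensor`.  `d0 : R →ₗ[ℝ] Ω 1` and `d k : Ω k →ₗ[ℝ] Ω (k+1)` model the exterior
derivative and `wedge` the wedge product of scalar forms.
-/

open TensorProduct

section PseudoConnections

variable {R : Type} [CommRing R] [Algebra ℝ R]
variable {Ω : ℕ → Type} [∀ k, AddCommGroup (Ω k)] [∀ k, Module R (Ω k)]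
  [∀ k, Module ℝ (Ω k)] [∀ k, IsScalarTower ℝ R (Ω k)]
variable {S : Type} [AddCommGroup S] [Module R S] [Module ℝ S] [IsScalarTower ℝ R S]

/-- The alternating product `β ∧_α ·  : Ω^l(ξ) → Ω^{k+l}(ξ)` induced by a bundle
homomorphism `α`, determined on generators by `β ∧_α (ω ⊗ s) = (β ∧ ω) ⊗ α s`.
Taking `α = LinearMap.id` gives the ordinary alternating product `∧`. -/
noncomputable def wedgeB (wedge : ∀ k l : ℕ, Ω k →ₗ[R] Ω l →ₗ[R] Ω (k + l))
    (k l : ℕ) (α : S →ₗ[R] S) (β : Ω k) : Ω l ⊗[R] S →ₗ[R] Ω (k + l) ⊗[R] S :=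
  LinearMap.rTensor S (wedge k l β) ∘ₗ LinearMap.lTensor (Ω l) α

/-- Cast between scalar form degrees. -/
noncomputable def mcast {a b : ℕ} (h : a = b) : Ω a ≃ₗ[ℝ] Ω b := by
  subst h; exact LinearEquiv.refl ℝ _

/-- Cast between bundle-valued form degrees. -/
noncomputable def ocast {a b : ℕ} (h : a = b) : Ω a ⊗[R] S ≃ₗ[ℝ] Ω b ⊗[R] S := by
  subst h; exact LinearEquiv.refl ℝ _

/-- `E^∇ = d^∇ ∘ ∇`. -/
noncomputable def Emap (nabla : S →ₗ[ℝ] Ω 1 ⊗[R] S)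
    (D : ∀ k, Ω k ⊗[R] S →ₗ[ℝ] Ω (k+1) ⊗[R] S) : S → Ω 2 ⊗[R] S :=
  fun s => D 1 (nabla s)

/-- `L^∇ = P ∘ ∇ − ∇ ∘ P`. -/
noncomputable def Lmap (P : S →ₗ[R] S) (nabla : S →ₗ[ℝ] Ω 1 ⊗[R] S) : S → Ω 1 ⊗[R] S :=
  fun s => LinearMap.lTensor (Ω 1) P (nabla s) - nabla (P s)

/-- The curvature form `F^∇ = P ∘ d^∇ ∘ ∇ − d^∇ ∘ P ∘ ∇ + d^∇ ∘ ∇ ∘ P`. -/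
noncomputable def Fmap (P : S →ₗ[R] S) (nabla : S →ₗ[ℝ] Ω 1 ⊗[R] S)
    (D : ∀ k, Ω k ⊗[R] S →ₗ[ℝ] Ω (k+1) ⊗[R] S) : S → Ω 2 ⊗[R] S :=
  fun s => LinearMap.lTensor (Ω 2) P (D 1 (nabla s)) - D 1 (LinearMap.lTensor (Ω 1) P (nabla s))
    + D 1 (nabla (P s))

/-- `G^∇ = d^∇ ∘ d^∇ ∘ ∇`. -/
noncomputable def Gmap (nabla : S →ₗ[ℝ] Ω 1 ⊗[R] S)
    (D : ∀ k, Ω k ⊗[R] S →ₗ[ℝ] Ω (k+1) ⊗[R] S) : S → Ω 3 ⊗[R] S :=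
  fun s => D 2 (D 1 (nabla s))

lemma mcast_rfl {a : ℕ} (h : a = a) (x : Ω a) : (mcast h : Ω a ≃ₗ[ℝ] Ω a) x = x := rfl

lemma wedgeB_tmul (wedge : ∀ k l : ℕ, Ω k →ₗ[R] Ω l →ₗ[R] Ω (k + l))
    (k l : ℕ) (α : S →ₗ[R] S) (β : Ω k) (ω : Ω l) (s : S) :
    wedgeB wedge k l α β (ω ⊗ₜ[R] s) = (wedge k l β ω) ⊗ₜ[R] α s := rfl

/-- For a pseudoconnection `∇` on `ξ` with principal homomorphism `P`
and `i ≥ 0`, on every generator `ω ⊗ s ∈ Ω^i(ξ)` one has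
`d^∇(d^∇(ω⊗s)) = ω ∧ E^∇(s) + (−1)^i dω ∧ L^∇(s)`. -/
theorem D_D_on_generators
    (d0 : R →ₗ[ℝ] Ω 1) (d : ∀ k, Ω k →ₗ[ℝ] Ω (k+1))
    (wedge : ∀ k l : ℕ, Ω k →ₗ[R] Ω l →ₗ[R] Ω (k + l))
    -- axioms of the smooth context: `d∘d = 0`, graded Leibniz rule, associativity
    (hdd : ∀ (k : ℕ) (ω : Ω k), d (k+1) (d k ω) = 0)
    (hd_wedge : ∀ (k l : ℕ) (ω : Ω k) (η : Ω l),
      d (k+l) (wedge k l ω η)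
        = mcast (show (k+1)+l = (k+l)+1 by omega) (wedge (k+1) l (d k ω) η)
          + ((-1:ℤ)^k) • (show Ω (k+l+1) from wedge k (l+1) ω (d l η)))
    (hassoc : ∀ (k l m : ℕ) (ω : Ω k) (η : Ω l) (ζ : Ω m),
      wedge (k+l) m (wedge k l ω η) ζ
        = mcast (show k+(l+m) = (k+l)+m by omega) (wedge k (l+m) ω (wedge l m η ζ)))
    -- the pseudoconnection with principal homomorphism `P`
    (P : S →ₗ[R] S) (nabla : S →ₗ[ℝ] Ω 1 ⊗[R] S)
    (hLeib : ∀ (f : R) (s : S), nabla (f • s) = d0 f ⊗ₜ[R] P s + f • nabla s)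
    -- its exterior derivative, determined on generators
    (D : ∀ k, Ω k ⊗[R] S →ₗ[ℝ] Ω (k+1) ⊗[R] S)
    (hD : ∀ (k : ℕ) (ω : Ω k) (s : S),
      D k (ω ⊗ₜ[R] s) = d k ω ⊗ₜ[R] P s
        + ((-1:ℤ)^k) • wedgeB wedge k 1 LinearMap.id ω (nabla s)) :
    ∀ (i : ℕ) (ω : Ω i) (s : S),
      D (i+1) (D i (ω ⊗ₜ[R] s))
        = wedgeB wedge i 2 LinearMap.id ω (Emap nabla D s)
          + ((-1:ℤ)^i) • wedgeB wedge (i+1) 1 LinearMap.id (d i ω) (Lmap P nabla s) := by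
  intro i ω s
  -- associativity of the induced wedge, on all of `Ω 1 ⊗ S`
  have wassoc : ∀ (η : Ω 1) (y : Ω 1 ⊗[R] S),
      wedgeB wedge (i+1) 1 LinearMap.id (wedge i 1 ω η) y
        = wedgeB wedge i 2 LinearMap.id ω (wedgeB wedge 1 1 LinearMap.id η y) := by
    intro η y
    induction y using TensorProduct.induction_on with
    | zero => simp
    | tmul ζ u =>
        rw [wedgeB_tmul, wedgeB_tmul, wedgeB_tmul, hassoc i 1 1 ω η ζ, mcast_rfl]
        rfl
    | add a b ha hb => rw [map_add, map_add, map_add, ha, hb]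
  -- key commutation of `D` with the induced wedge
  have key : ∀ (x : Ω 1 ⊗[R] S),
      D (i+1) (wedgeB wedge i 1 LinearMap.id ω x)
        = wedgeB wedge (i+1) 1 LinearMap.id (d i ω) (LinearMap.lTensor (Ω 1) P x)
          + ((-1:ℤ)^i) • wedgeB wedge i 2 LinearMap.id ω (D 1 x) := by
    intro x
    induction x using TensorProduct.induction_on with
    | zero => simp
    | tmul η t =>
        simp only [wedgeB_tmul, LinearMap.id_apply]
        rw [hD (i+1) (wedge i 1 ω η) t, hd_wedge i 1 ω η, mcast_rfl,
          LinearMap.lTensor_tmul, hD 1 η t, map_add, map_zsmul,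
          wassoc η (nabla t)]
        simp only [wedgeB_tmul, LinearMap.id_apply]
        rw [add_tmul, ← TensorProduct.smul_tmul']
        simp only [Nat.reduceAdd, smul_add, smul_smul, pow_succ, pow_zero, pow_one, mul_neg,
          mul_one, neg_smul, smul_neg]
        abel
    | add a b ha hb =>
        simp only [map_add, ha, hb, smul_add]
        abel
  have hsq : ((-1:ℤ)^i) * ((-1:ℤ)^i) = 1 := by
    rw [← pow_add, ← two_mul, pow_mul]; norm_num
  rw [hD i ω s, map_add, map_zsmul, hD (i+1) (d i ω) (P s), hdd i ω, TensorProduct.zero_tmul (Ω (i+1+1)) (P (P s)),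
    zero_add, key (nabla s)]
  unfold Emap Lmap
  rw [map_sub]
  simp only [smul_add, smul_sub, smul_smul, hsq, one_smul, pow_succ, pow_one,
    mul_neg, mul_one, neg_smul, smul_neg]
  abel

end PseudoConnections
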